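/- arXiv:2209.12237 — 2 statements merged into one kernel-verified Lean document; each statement's English description precedes it below -/
import Mathlib

section
/- Let γ(s,τ) = ( r_* cos((−s−a₁τ)/√(k²+r_*²)), r_* sin((−s−a₁τ)/√(k²+r_*²)), (ks−b₁τ)/√(k²+r_*²) ) with a₁ = dk/(4π(k²+r_*²)) and b₁ = dr_*²/(4π(k²+r_*²)). Then γ satisfies the binormal curvature flow equation ∂_τ γ = (d/(4π)) (∂_s γ × ∂_{ss} γ). -/
open Real

/-!
Write `θ = (-s - A τ) / c` and `γ = (r cos θ, r sin θ, (k s - B τ) / c)`. Then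
`∂_s γ × ∂_ss γ = c⁻³ (k r sin θ, -k r cos θ, -r²)` (using `sin² θ + cos² θ = 1`) while
`∂_τ γ = c⁻¹ (A r sin θ, -A r cos θ, -B)`, so the flow equation with coefficient `β` reduces to
`A = β k / c²` and `B = β r² / c²`. For `c = √(k² + r²)` and `β = d / (4π)` these are the
speeds `a₁`, `b₁` of the helix.
-/

/-- The traveling-rotating helix parametrization. -/
noncomputable def helix (k rstar d : ℝ) (s τ : ℝ) : Fin 3 → ℝ :=
  ![rstar * Real.cos ((-s - d * k / (4 * π * (k ^ 2 + rstar ^ 2)) * τ) / Real.sqrt (k ^ 2 + rstar ^ 2)),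
    rstar * Real.sin ((-s - d * k / (4 * π * (k ^ 2 + rstar ^ 2)) * τ) / Real.sqrt (k ^ 2 + rstar ^ 2)),
    (k * s - d * rstar ^ 2 / (4 * π * (k ^ 2 + rstar ^ 2)) * τ) / Real.sqrt (k ^ 2 + rstar ^ 2)]

theorem HasDerivAt.vec3 {f g h : ℝ → ℝ} {f' g' h' x : ℝ} (hf : HasDerivAt f f' x)
    (hg : HasDerivAt g g' x) (hh : HasDerivAt h h' x) :
    HasDerivAt (fun y => ![f y, g y, h y]) ![f', g', h'] x :=
  hf.finCons <| hg.finCons <| hh.finCons <|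
    (hasDerivAt_const x ![]).congr_deriv (Subsingleton.elim _ _)

theorem deriv_apply_eq_of_hasDerivAt {ι : Type*} [Fintype ι] {f : ℝ → ι → ℝ} {f' : ι → ℝ}
    {x : ℝ} (h : HasDerivAt f f' x) : (fun i => deriv (fun y => f y i) x) = f' :=
  funext fun i => (hasDerivAt_pi.1 h i).deriv

theorem deriv_deriv_apply_eq_of_hasDerivAt {ι : Type*} [Fintype ι] {f f' : ℝ → ι → ℝ}
    {f'' : ι → ℝ} {x : ℝ} (h : ∀ y, HasDerivAt f (f' y) y) (h' : HasDerivAt f' f'' x) :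
    (fun i => deriv (fun y => deriv (fun z => f z i) y) x) = f'' := by
  have hf' : ∀ i, (fun y => deriv (fun z => f z i) y) = fun y => f' y i :=
    fun i => funext fun y => (hasDerivAt_pi.1 (h y) i).deriv
  simp only [hf']
  exact deriv_apply_eq_of_hasDerivAt h'

noncomputable def rotatingHelix (r k c A B : ℝ) (s τ : ℝ) : Fin 3 → ℝ :=
  ![r * cos ((-s - A * τ) / c), r * sin ((-s - A * τ) / c), (k * s - B * τ) / c]

section RotatingHelix

variable (r k c A B : ℝ)

theorem hasDerivAt_rotatingHelix_arclength (s τ : ℝ) :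
    HasDerivAt (fun u => rotatingHelix r k c A B u τ)
      (c⁻¹ • ![r * sin ((-s - A * τ) / c), -(r * cos ((-s - A * τ) / c)), k]) s := by
  have hθ : HasDerivAt (fun u => (-u - A * τ) / c) (-c⁻¹) s := by
    simpa [div_eq_mul_inv] using ((hasDerivAt_id s).neg.sub_const (A * τ)).div_const c
  have hz : HasDerivAt (fun u => (k * u - B * τ) / c) (k / c) s := by
    simpa using (((hasDerivAt_id s).const_mul k).sub_const (B * τ)).div_const c
  refine ((hθ.cos.const_mul r).vec3 (hθ.sin.const_mul r) hz).congr_deriv ?_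
  ext i; fin_cases i <;> simp [div_eq_mul_inv] <;> ring

theorem hasDerivAt_rotatingHelix_time (s τ : ℝ) :
    HasDerivAt (fun t => rotatingHelix r k c A B s t)
      (c⁻¹ • ![A * r * sin ((-s - A * τ) / c), -(A * r * cos ((-s - A * τ) / c)), -B]) τ := by
  have hθ : HasDerivAt (fun t => (-s - A * t) / c) (-A / c) τ := by
    simpa using (((hasDerivAt_id τ).const_mul A).const_sub (-s)).div_const c
  have hz : HasDerivAt (fun t => (k * s - B * t) / c) (-B / c) τ := by
    simpa using (((hasDerivAt_id τ).const_mul B).const_sub (k * s)).div_const c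
  refine ((hθ.cos.const_mul r).vec3 (hθ.sin.const_mul r) hz).congr_deriv ?_
  ext i; fin_cases i <;> simp [div_eq_mul_inv] <;> ring

theorem hasDerivAt_rotatingHelix_tangent (s τ : ℝ) :
    HasDerivAt (fun u => c⁻¹ • ![r * sin ((-u - A * τ) / c), -(r * cos ((-u - A * τ) / c)), k])
      ((c ^ 2)⁻¹ • ![-(r * cos ((-s - A * τ) / c)), -(r * sin ((-s - A * τ) / c)), 0]) s := by
  have hθ : HasDerivAt (fun u => (-u - A * τ) / c) (-c⁻¹) s := by
    simpa [div_eq_mul_inv] using ((hasDerivAt_id s).neg.sub_const (A * τ)).div_const c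
  refine (((hθ.sin.const_mul r).vec3 (hθ.cos.const_mul r).neg
    (hasDerivAt_const s k)).const_smul c⁻¹).congr_deriv ?_
  ext i; fin_cases i <;> simp [div_eq_mul_inv] <;> ring

theorem rotatingHelix_binormal_flow {β : ℝ} (hA : A = β * k / c ^ 2)
    (hB : B = β * r ^ 2 / c ^ 2) (s τ : ℝ) :
    (fun i => deriv (fun t => rotatingHelix r k c A B s t i) τ) =
      β • crossProduct (fun i => deriv (fun u => rotatingHelix r k c A B u τ i) s)
        (fun i => deriv (fun u => deriv (fun u' => rotatingHelix r k c A B u' τ i) u) s) := by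
  rw [deriv_apply_eq_of_hasDerivAt (hasDerivAt_rotatingHelix_time r k c A B s τ),
    deriv_apply_eq_of_hasDerivAt (hasDerivAt_rotatingHelix_arclength r k c A B s τ),
    deriv_deriv_apply_eq_of_hasDerivAt (fun u => hasDerivAt_rotatingHelix_arclength r k c A B u τ)
      (hasDerivAt_rotatingHelix_tangent r k c A s τ)]
  set θ := (-s - A * τ) / c
  ext i; fin_cases i <;>
    simp only [cross_apply, Pi.smul_apply, Matrix.smul_cons, Matrix.smul_empty, smul_eq_mul,
      Matrix.cons_val_zero, Matrix.cons_val_one, Matrix.cons_val, Fin.zero_eta, Fin.mk_one,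
      Fin.reduceFinMk]
  · rw [hA]; ring
  · rw [hA]; ring
  · rw [hB]; linear_combination (β * r ^ 2 / c ^ 3) * sin_sq_add_cos_sq θ

end RotatingHelix

theorem helix_binormal_flow_general (k rstar d : ℝ) (s τ : ℝ) :
    (fun i => deriv (fun t => helix k rstar d s t i) τ) =
      (d / (4 * π)) •
        crossProduct (fun i => deriv (fun u => helix k rstar d u τ i) s)
          (fun i => deriv (fun u => deriv (fun u' => helix k rstar d u' τ i) u) s) := by
  have hc : √(k ^ 2 + rstar ^ 2) ^ 2 = k ^ 2 + rstar ^ 2 := sq_sqrt (by positivity)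
  exact rotatingHelix_binormal_flow rstar k _ _ _ (by rw [hc, div_mul_eq_mul_div, div_div])
    (by rw [hc, div_mul_eq_mul_div, div_div]) s τ

theorem helix_binormal_flow (k rstar d : ℝ) (hk : 0 < k) (hr : 0 < rstar) (hd : 0 < d)
    (s τ : ℝ) :
    (fun i => deriv (fun t => helix k rstar d s t i) τ) =
      (d / (4 * π)) •
        crossProduct (fun i => deriv (fun u => helix k rstar d u τ i) s)
          (fun i => deriv (fun u => deriv (fun u' => helix k rstar d u' τ i) u) s) :=
  helix_binormal_flow_general k rstar d s τ
end

section
/- Let ω ∈ L¹(ℝ²) with 0 ≤ ω ≤ 1/ε², ∫ ω = d, and supp(ω) ⊆ B_r(0) for some r ≤ 1. Then ∬ ln(1/|x−y|) ω(x)ω(y) dx dy ≤ d² ln(1/ε) + C for a constant C = C(d) depending only on d, by the Riesz rearrangement inequality: the double integral is maximized when ω is replaced by its symmetric decreasing rearrangement (1/ε²)1_{B_{ρ}(0)} with πρ² = dε², and for that patch the double integral equals d² ln(1/ε) + O(1). -/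
/-!
Write `p(s) = (log (ε / s))⁺`. For every `s`, `log (1/s) ≤ log (1/ε) + p(s)`, and `p(‖x - ·‖)`
has integral at most `|B₁| εⁿ` in dimension `n`: by the layer-cake formula its superlevel set at
height `t > 0` lies in the ball of radius `ε e^{-t}` around `x`. Since `0 ≤ ω ≤ ε⁻ⁿ`, the
potential `∫ log (1/‖x - y‖) ω(y) dy` is therefore at most `d log (1/ε) + |B₁|` for every `x`,
and integrating against `ω(x) dx` gives `d² log (1/ε) + d |B₁|`, with `|B₁| = π` in the plane.
-/

open MeasureTheory Real Set Metric Module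

lemma log_one_div_le_log_one_div_add_posPart {ε : ℝ} (hε : 0 < ε) (hε1 : ε ≤ 1) (s : ℝ) :
    log (1 / s) ≤ log (1 / ε) + (log (ε / s))⁺ := by
  rcases eq_or_ne s 0 with rfl | hs
  · simpa using log_nonneg (one_le_one_div hε hε1)
  · have hsplit : log (1 / s) = log (1 / ε) + log (ε / s) := by
      rw [one_div, one_div, log_inv, log_inv, log_div hε.ne' hs]; ring
    rw [hsplit]
    exact add_le_add_right (le_posPart _) _

section LogKernel

variable {E : Type*} [NormedAddCommGroup E]

lemma setOf_le_posPart_log_div_norm_sub_subset {ε t : ℝ} (hε : 0 < ε) (ht : 0 < t) (x : E) :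
    {y | t ≤ (log (ε / ‖x - y‖))⁺} ⊆ closedBall x (ε * exp (-t)) := by
  intro y hy
  have hlog : t ≤ log (ε / ‖x - y‖) := by
    simpa [posPart_def, ht.not_ge] using hy
  have hne : x - y ≠ 0 := by
    rintro h
    simp [h] at hlog
    linarith
  have hexp : exp t ≤ ε / ‖x - y‖ :=
    (le_log_iff_exp_le (div_pos hε (norm_pos_iff.mpr hne))).mp hlog
  rw [mem_closedBall', dist_eq_norm, exp_neg, ← div_eq_mul_inv]
  rw [le_div_iff₀ (norm_pos_iff.mpr hne)] at hexp
  rw [le_div_iff₀ (exp_pos t)]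
  linarith

variable [MeasurableSpace E] [BorelSpace E]

lemma measurable_posPart_log_div_norm_sub (ε : ℝ) (x : E) :
    Measurable fun y => (log (ε / ‖x - y‖))⁺ := by
  fun_prop

variable [NormedSpace ℝ E] [FiniteDimensional ℝ E] (μ : Measure E) [μ.IsAddHaarMeasure]

lemma lintegral_posPart_log_div_norm_sub_le {ε : ℝ} (hε : 0 < ε) (hE : 0 < finrank ℝ E)
    (x : E) :
    ∫⁻ y, ENNReal.ofReal (log (ε / ‖x - y‖))⁺ ∂μ ≤
      ENNReal.ofReal (ε ^ finrank ℝ E) * μ (ball 0 1) := by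
  rw [lintegral_eq_lintegral_meas_le μ (ae_of_all _ fun _ => posPart_nonneg _)
    (measurable_posPart_log_div_norm_sub ε x).aemeasurable]
  calc ∫⁻ t in Ioi 0, μ {y | t ≤ (log (ε / ‖x - y‖))⁺}
      ≤ ∫⁻ t in Ioi 0, ENNReal.ofReal (exp (-t)) *
          (ENNReal.ofReal (ε ^ finrank ℝ E) * μ (ball 0 1)) := by
        refine setLIntegral_mono' measurableSet_Ioi fun t ht => ?_
        calc μ {y | t ≤ (log (ε / ‖x - y‖))⁺}
            ≤ μ (closedBall x (ε * exp (-t))) :=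
              measure_mono (setOf_le_posPart_log_div_norm_sub_subset hε (mem_Ioi.mp ht) x)
          _ = ENNReal.ofReal ((ε * exp (-t)) ^ finrank ℝ E) * μ (ball 0 1) :=
              Measure.addHaar_closedBall μ x (by positivity)
          _ ≤ _ := by
              rw [← mul_assoc, ← ENNReal.ofReal_mul (exp_pos _).le]
              gcongr
              rw [mul_pow, mul_comm]
              gcongr
              exact pow_le_of_le_one (exp_pos _).le
                (exp_le_one_iff.mpr (neg_nonpos.mpr (mem_Ioi.mp ht).le)) hE.ne'
    _ = ENNReal.ofReal (ε ^ finrank ℝ E) * μ (ball 0 1) := by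
        rw [lintegral_mul_const _ (by fun_prop), ← ofReal_integral_eq_lintegral_ofReal
          (integrableOn_exp_neg_Ioi 0) (ae_of_all _ fun _ => (exp_pos _).le),
          integral_exp_neg_Ioi_zero, ENNReal.ofReal_one, one_mul]

lemma integrable_posPart_log_div_norm_sub {ε : ℝ} (hε : 0 < ε) (hE : 0 < finrank ℝ E) (x : E) :
    Integrable (fun y => (log (ε / ‖x - y‖))⁺) μ := by
  refine ⟨(measurable_posPart_log_div_norm_sub ε x).aestronglyMeasurable,
    (hasFiniteIntegral_iff_ofReal (ae_of_all _ fun _ => posPart_nonneg _)).mpr ?_⟩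
  exact (lintegral_posPart_log_div_norm_sub_le μ hε hE x).trans_lt
    (ENNReal.mul_lt_top ENNReal.ofReal_lt_top measure_ball_lt_top)

lemma integral_posPart_log_div_norm_sub_le {ε : ℝ} (hε : 0 < ε) (hE : 0 < finrank ℝ E) (x : E) :
    ∫ y, (log (ε / ‖x - y‖))⁺ ∂μ ≤ ε ^ finrank ℝ E * μ.real (ball 0 1) := by
  rw [integral_eq_lintegral_of_nonneg_ae (ae_of_all _ fun _ => posPart_nonneg _)
    (measurable_posPart_log_div_norm_sub ε x).aestronglyMeasurable]
  refine ENNReal.toReal_le_of_le_ofReal (by positivity) ?_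
  rw [ENNReal.ofReal_mul (by positivity), ofReal_measureReal measure_ball_lt_top.ne]
  exact lintegral_posPart_log_div_norm_sub_le μ hε hE x

lemma integral_log_one_div_norm_sub_mul_le {ε M : ℝ} (hε : 0 < ε) (hε1 : ε ≤ 1)
    (hE : 0 < finrank ℝ E) {ω : E → ℝ} (hω : Integrable ω μ) (hω0 : ∀ y, 0 ≤ ω y)
    (hωM : ∀ y, ω y ≤ M) (x : E) :
    ∫ y, log (1 / ‖x - y‖) * ω y ∂μ ≤
      log (1 / ε) * ∫ y, ω y ∂μ + M * (ε ^ finrank ℝ E * μ.real (ball 0 1)) := by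
  have hlog : 0 ≤ log (1 / ε) := log_nonneg (one_le_one_div hε hε1)
  have hM : 0 ≤ M := (hω0 x).trans (hωM x)
  have hp := integrable_posPart_log_div_norm_sub μ hε hE x
  have hpointwise : ∀ y, log (1 / ‖x - y‖) * ω y ≤
      log (1 / ε) * ω y + M * (log (ε / ‖x - y‖))⁺ := fun y =>
    calc log (1 / ‖x - y‖) * ω y
        ≤ (log (1 / ε) + (log (ε / ‖x - y‖))⁺) * ω y := by
          gcongr
          · exact hω0 y
          · exact log_one_div_le_log_one_div_add_posPart hε hε1 _
      _ ≤ log (1 / ε) * ω y + M * (log (ε / ‖x - y‖))⁺ := by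
          nlinarith [hωM y, posPart_nonneg (log (ε / ‖x - y‖))]
  by_cases hint : Integrable (fun y => log (1 / ‖x - y‖) * ω y) μ
  · calc ∫ y, log (1 / ‖x - y‖) * ω y ∂μ
        ≤ ∫ y, (log (1 / ε) * ω y + M * (log (ε / ‖x - y‖))⁺) ∂μ :=
          integral_mono hint ((hω.const_mul _).add (hp.const_mul _)) hpointwise
      _ = log (1 / ε) * ∫ y, ω y ∂μ + M * ∫ y, (log (ε / ‖x - y‖))⁺ ∂μ := by
          rw [integral_add (hω.const_mul _) (hp.const_mul _), integral_const_mul,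
            integral_const_mul]
      _ ≤ _ := by gcongr; exact integral_posPart_log_div_norm_sub_le μ hε hE x
  · rw [integral_undef hint]
    have : 0 ≤ ∫ y, ω y ∂μ := integral_nonneg hω0
    positivity

end LogKernel

lemma integral_integral_mul_mul_le {α : Type*} [MeasurableSpace α] {μ : Measure α}
    (K : α → α → ℝ) {ω : α → ℝ} (hω : Integrable ω μ) (hω0 : ∀ x, 0 ≤ ω x) {B : ℝ}
    (hB0 : 0 ≤ B) (hB : ∀ x, ∫ y, K x y * ω y ∂μ ≤ B) :
    ∫ x, ∫ y, K x y * ω x * ω y ∂μ ∂μ ≤ (∫ x, ω x ∂μ) * B := by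
  have hfactor : ∀ x, ∫ y, K x y * ω x * ω y ∂μ = ω x * ∫ y, K x y * ω y ∂μ := fun x => by
    rw [← integral_const_mul]
    congr 1 with y
    ring
  simp only [hfactor]
  by_cases hint : Integrable (fun x => ω x * ∫ y, K x y * ω y ∂μ) μ
  · calc ∫ x, ω x * ∫ y, K x y * ω y ∂μ ∂μ ≤ ∫ x, ω x * B ∂μ :=
          integral_mono hint (hω.mul_const B) fun x => mul_le_mul_of_nonneg_left (hB x) (hω0 x)
      _ = (∫ x, ω x ∂μ) * B := integral_mul_const B ω
  · rw [integral_undef hint]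
    exact mul_nonneg (integral_nonneg hω0) hB0

theorem log_energy_upper_bound_general (d : ℝ) :
    ∃ C : ℝ, ∀ ε : ℝ, 0 < ε → ε < 1 →
      ∀ (ω : EuclideanSpace ℝ (Fin 2) → ℝ) (r : ℝ), Measurable ω →
        (∀ x, 0 ≤ ω x) → (∀ x, ω x ≤ 1 / ε ^ 2) →
        (∫ x, ω x = d) → r ≤ 1 →
        Function.support ω ⊆ Metric.ball (0 : EuclideanSpace ℝ (Fin 2)) r →
        ∫ x, ∫ y, Real.log (1 / ‖x - y‖) * ω x * ω y ≤
          d ^ 2 * Real.log (1 / ε) + C := by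
  refine ⟨d * π, fun ε hε hε1 ω r hmeas hω0 hωM hωd _ hsupp => ?_⟩
  have hω : Integrable ω := by
    rw [← integrableOn_iff_integrable_of_support_subset hsupp]
    refine Measure.integrableOn_of_bounded measure_ball_lt_top.ne hmeas.aestronglyMeasurable
      (M := 1 / ε ^ 2) (ae_of_all _ fun y => ?_)
    rw [norm_of_nonneg (hω0 y)]
    exact hωM y
  have hd : 0 ≤ d := hωd ▸ integral_nonneg fun y => hω0 y
  have hlog : 0 ≤ log (1 / ε) := log_nonneg (one_le_one_div hε hε1.le)
  have hball : volume.real (ball (0 : EuclideanSpace ℝ (Fin 2)) 1) = π := by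
    simp [measureReal_def, pi_pos.le]
  have hpotential := integral_log_one_div_norm_sub_mul_le volume hε hε1.le (by simp) hω hω0 hωM
  rw [finrank_euclideanSpace_fin, hball, hωd,
    show 1 / ε ^ 2 * (ε ^ 2 * π) = π by field_simp] at hpotential
  calc ∫ x, ∫ y, log (1 / ‖x - y‖) * ω x * ω y
      ≤ (∫ x, ω x) * (log (1 / ε) * d + π) :=
        integral_integral_mul_mul_le _ hω hω0 (by positivity) hpotential
    _ = d ^ 2 * log (1 / ε) + d * π := by rw [hωd]; ring

theorem log_energy_upper_bound (d : ℝ) (hd : 0 < d) :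
    ∃ C : ℝ, ∀ ε : ℝ, 0 < ε → ε < 1 →
      ∀ (ω : EuclideanSpace ℝ (Fin 2) → ℝ) (r : ℝ), Measurable ω →
        (∀ x, 0 ≤ ω x) → (∀ x, ω x ≤ 1 / ε ^ 2) →
        (∫ x, ω x = d) → r ≤ 1 →
        Function.support ω ⊆ Metric.ball (0 : EuclideanSpace ℝ (Fin 2)) r →
        ∫ x, ∫ y, Real.log (1 / ‖x - y‖) * ω x * ω y ≤
          d ^ 2 * Real.log (1 / ε) + C :=
  log_energy_upper_bound_general d
end
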